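/- arXiv:2512.13805 — 2 statements merged into one kernel-verified Lean document; each statement's English description precedes it below -/
import Mathlib

section
/- Let k ≥ 2 and f = x^k y^k + x^{2k} ∈ ℂ[x,y]. Then the apolar ideal of f is Ann(f) = (Y^{k+1}, X^{k+1} − binom(2k,k)·X Y^k), where X, Y act as ∂/∂x, ∂/∂y. -/
open MvPolynomial

noncomputable def monoDeriv {n : ℕ} (m : Fin n →₀ ℕ) :
    Module.End ℂ (MvPolynomial (Fin n) ℂ) :=
  ((List.finRange n).map
    (fun i => ((pderiv i : Derivation ℂ (MvPolynomial (Fin n) ℂ) (MvPolynomial (Fin n) ℂ)).toLinearMap) ^ (m i))).prod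

/-- `apolarAct D f` is the result `D ⌟ f` of applying `D` to `f` as a
differential operator with constant coefficients (`X i` acts as `∂/∂x i`). -/
noncomputable def apolarAct {n : ℕ} (D f : MvPolynomial (Fin n) ℂ) : MvPolynomial (Fin n) ℂ :=
  ∑ m ∈ D.support, D.coeff m • monoDeriv m f

/-!
Partial derivatives commute, so `m ↦ ∂^m` is a monoid hom and `D ↦ (D ⌟ ·)` is an algebra map
`ℂ[X, Y] → End ℂ[x, y]`; hence `Ann(f)` is an ideal. Both generators kill `f`, the second
because `(2k)! / (k-1)! = binom(2k, k) · k · k!`.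

Conversely `Y^{k+1}` and `X^{k+1} Y` lie in the ideal, and `X^{k+i} ≡ binom(2k, k) X^i Y^k` for
`i ≥ 1`, so modulo the ideal every `D` reduces to some `R` supported on `{X^a Y^b : a, b ≤ k}`.
If such an `R` kills `f`, comparing the coefficients of `x^{k-a} y^{k-b}` in `R ⌟ f` forces the
coefficients of `R` to vanish, first for `b < k` and then for `b = k`.
-/

theorem MvPolynomial.pderiv_pderiv_comm {σ R : Type*} [CommRing R] (i j : σ)
    (p : MvPolynomial σ R) : pderiv i (pderiv j p) = pderiv j (pderiv i p) := by
  classical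
  have : ⁅pderiv i, pderiv j⁆ = (0 : Derivation R (MvPolynomial σ R) (MvPolynomial σ R)) :=
    derivation_ext fun l => by
      rw [Derivation.commutator_apply, pderiv_X, pderiv_X, Pi.single_apply, Pi.single_apply]
      split_ifs <;> simp
  simpa [Derivation.commutator_apply, sub_eq_zero] using congr($this p)

theorem List.prod_map_pow_add_of_commute {ι M : Type*} [Monoid M] {g : ι → M}
    (hg : ∀ i j, Commute (g i) (g j)) (a b : ι → ℕ) (l : List ι) :
    (l.map fun i => g i ^ (a i + b i)).prod =
      (l.map fun i => g i ^ a i).prod * (l.map fun i => g i ^ b i).prod := by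
  induction l with
  | nil => simp
  | cons i l ih =>
    have hcomm : Commute (g i ^ b i) (l.map fun j => g j ^ a j).prod :=
      Commute.list_prod_right _ _ fun x hx => by
        obtain ⟨j, -, rfl⟩ := List.mem_map.mp hx
        exact ((hg i j).pow_pow _ _)
    simp only [List.map_cons, List.prod_cons]
    rw [ih, pow_add, mul_assoc, ← mul_assoc (g i ^ b i), hcomm.eq]
    simp only [mul_assoc]

section ApolarAction

variable {n : ℕ}

theorem monoDeriv_add (m m' : Fin n →₀ ℕ) :
    monoDeriv (m + m') = monoDeriv m * monoDeriv m' :=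
  List.prod_map_pow_add_of_commute (fun i j => LinearMap.ext (pderiv_pderiv_comm i j)) m m' _

theorem monoDeriv_zero : monoDeriv (0 : Fin n →₀ ℕ) = 1 := by
  simp [monoDeriv]

theorem monoDeriv_single (i : Fin n) (a : ℕ) :
    monoDeriv (Finsupp.single i a) = (pderiv i).toLinearMap ^ a := by
  rw [monoDeriv, List.prod_map_eq_pow_single i, List.count_eq_one_of_mem (List.nodup_finRange n)
    (List.mem_finRange i), pow_one, Finsupp.single_eq_same]
  intro j hj _
  rw [Finsupp.single_eq_of_ne hj, pow_zero]

noncomputable def monoDerivHom :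
    Multiplicative (Fin n →₀ ℕ) →* Module.End ℂ (MvPolynomial (Fin n) ℂ) where
  toFun m := monoDeriv m.toAdd
  map_one' := monoDeriv_zero
  map_mul' m m' := monoDeriv_add m.toAdd m'.toAdd

noncomputable def apolarAlgHom :
    MvPolynomial (Fin n) ℂ →ₐ[ℂ] Module.End ℂ (MvPolynomial (Fin n) ℂ) :=
  AddMonoidAlgebra.lift ℂ _ _ monoDerivHom

theorem apolarAlgHom_apply (D f : MvPolynomial (Fin n) ℂ) : apolarAlgHom D f = apolarAct D f := by
  rw [apolarAlgHom, AddMonoidAlgebra.lift_apply, Finsupp.sum, LinearMap.sum_apply]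
  rfl

theorem apolarAct_add_right (D f g : MvPolynomial (Fin n) ℂ) :
    apolarAct D (f + g) = apolarAct D f + apolarAct D g := by
  simp only [← apolarAlgHom_apply, map_add]

theorem apolarAct_sub_left (D E f : MvPolynomial (Fin n) ℂ) :
    apolarAct (D - E) f = apolarAct D f - apolarAct E f := by
  simp only [← apolarAlgHom_apply, map_sub, LinearMap.sub_apply]

theorem apolarAct_C_mul (c : ℂ) (D f : MvPolynomial (Fin n) ℂ) :
    apolarAct (C c * D) f = c • apolarAct D f := by
  simp only [← apolarAlgHom_apply, ← smul_eq_C_mul, map_smul, LinearMap.smul_apply]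

theorem apolarAct_monomial (m : Fin n →₀ ℕ) (c : ℂ) (f : MvPolynomial (Fin n) ℂ) :
    apolarAct (monomial m c) f = c • monoDeriv m f := by
  rw [← apolarAlgHom_apply, apolarAlgHom, monomial, AddMonoidAlgebra.lsingle_apply,
    AddMonoidAlgebra.lift_single]
  rfl

noncomputable def apolarIdeal (f : MvPolynomial (Fin n) ℂ) : Ideal (MvPolynomial (Fin n) ℂ) where
  carrier := {D | apolarAct D f = 0}
  add_mem' {D E} hD hE := by
    simp_all only [Set.mem_ofPred_eq, ← apolarAlgHom_apply, map_add, LinearMap.add_apply, add_zero]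
  zero_mem' := by simp [← apolarAlgHom_apply]
  smul_mem' c D hD := by
    simp_all only [Set.mem_ofPred_eq, ← apolarAlgHom_apply, smul_eq_mul, map_mul,
      Module.End.mul_apply, map_zero]

theorem mem_apolarIdeal {f D : MvPolynomial (Fin n) ℂ} : D ∈ apolarIdeal f ↔ apolarAct D f = 0 :=
  Iff.rfl

theorem MvPolynomial.pderiv_pow_monomial {σ R : Type*} [CommSemiring R] (i : σ) (a : ℕ)
    (s : σ →₀ ℕ) (c : R) :
    ((pderiv i).toLinearMap ^ a) (monomial s c) =
      monomial (s - Finsupp.single i a) (c * (s i).descFactorial a) := by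
  classical
  induction a generalizing s c with
  | zero => simp
  | succ a ih =>
    rw [pow_succ, Module.End.mul_apply, Derivation.coeFn_coe, pderiv_monomial, ih,
      Finsupp.tsub_apply, Finsupp.single_eq_same, tsub_tsub, ← Finsupp.single_add, add_comm 1 a]
    rcases h : s i with _ | t
    · simp
    · rw [Nat.succ_descFactorial_succ, Nat.succ_sub_one, Nat.cast_mul, mul_assoc]

theorem monoDeriv_monomial (m s : Fin n →₀ ℕ) (c : ℂ) :
    monoDeriv m (monomial s c) =
      monomial (s - m) (c * ∏ i, ((s i).descFactorial (m i) : ℂ)) := by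
  induction m using Finsupp.induction with
  | zero => simp [monoDeriv_zero]
  | single_add i a m hi _ ih =>
    have hmi : m i = 0 := Finsupp.notMem_support_iff.mp hi
    have hfactor (j : Fin n) : ((s j).descFactorial ((Finsupp.single i a + m) j) : ℂ) =
        (s j).descFactorial (m j) * if j = i then ((s i).descFactorial a : ℂ) else 1 := by
      rcases eq_or_ne j i with rfl | hj
      · simp [hmi]
      · simp [hj]
    rw [monoDeriv_add, Module.End.mul_apply, ih, monoDeriv_single, pderiv_pow_monomial, tsub_tsub,
      add_comm m, Finsupp.tsub_apply, hmi, tsub_zero, mul_assoc,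
      Finset.prod_congr rfl fun j _ => hfactor j, Finset.prod_mul_distrib, Finset.prod_ite_eq']
    simp

theorem coeff_monoDeriv_monomial (m s t : Fin n →₀ ℕ) :
    coeff t (monoDeriv m (monomial s 1)) =
      if m + t = s then ∏ i, ((s i).descFactorial (m i) : ℂ) else 0 := by
  rw [monoDeriv_monomial, coeff_monomial, one_mul]
  by_cases hms : m ≤ s
  · simp only [tsub_eq_iff_eq_add_of_le hms, add_comm t m, eq_comm]
  · obtain ⟨i, hi⟩ : ∃ i, s i < m i := by simpa [Finsupp.le_def] using hms
    rw [Finset.prod_eq_zero (Finset.mem_univ i) (by simp [Nat.descFactorial_eq_zero_iff_lt.mpr hi]),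
      if_neg fun (h : m + t = s) => hms (h ▸ le_self_add), ite_self]

theorem coeff_apolarAct_monomial (D : MvPolynomial (Fin n) ℂ) (s t : Fin n →₀ ℕ) :
    coeff t (apolarAct D (monomial s 1)) =
      ∑ m ∈ D.support,
        D.coeff m * if m + t = s then ∏ i, ((s i).descFactorial (m i) : ℂ) else 0 := by
  simp only [apolarAct, coeff_sum, coeff_smul, coeff_monoDeriv_monomial, smul_eq_mul]

theorem coeff_apolarAct_monomial_of_add_eq (D : MvPolynomial (Fin n) ℂ) {m s t : Fin n →₀ ℕ}
    (h : m + t = s) :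
    coeff t (apolarAct D (monomial s 1)) = D.coeff m * ∏ i, ((s i).descFactorial (m i) : ℂ) := by
  rw [coeff_apolarAct_monomial, Finset.sum_eq_single m, if_pos h]
  · intro m' _ hm'
    rw [if_neg fun h' => hm' (add_right_cancel (h'.trans h.symm)), mul_zero]
  · intro hm
    rw [notMem_support_iff.mp hm, zero_mul]

theorem coeff_apolarAct_monomial_of_not_le (D : MvPolynomial (Fin n) ℂ) {s t : Fin n →₀ ℕ}
    (h : ¬t ≤ s) : coeff t (apolarAct D (monomial s 1)) = 0 := by
  rw [coeff_apolarAct_monomial]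
  exact Finset.sum_eq_zero fun m _ => by
    rw [if_neg fun (h' : m + t = s) => h (h' ▸ le_add_self), mul_zero]

theorem prod_descFactorial_ne_zero {m s : Fin n →₀ ℕ} (h : m ≤ s) :
    ∏ i, ((s i).descFactorial (m i) : ℂ) ≠ 0 :=
  Finset.prod_ne_zero_iff.mpr fun i _ =>
    Nat.cast_ne_zero.mpr (Nat.descFactorial_eq_zero_iff_lt.not.mpr (not_lt.mpr (h i)))

end ApolarAction

open Finsupp (single)

theorem X_pow_mul_X_pow_eq_monomial (a b : ℕ) :
    (X 0 ^ a * X 1 ^ b : MvPolynomial (Fin 2) ℂ) = monomial (single 0 a + single 1 b) 1 := by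
  rw [X_pow_eq_monomial, X_pow_eq_monomial, monomial_mul, one_mul]

theorem apolarAct_X_pow_mul_X_pow (a b p q : ℕ) :
    apolarAct (X 0 ^ a * X 1 ^ b) (X 0 ^ p * X 1 ^ q : MvPolynomial (Fin 2) ℂ) =
      ((p.descFactorial a * q.descFactorial b : ℕ) : ℂ) • (X 0 ^ (p - a) * X 1 ^ (q - b)) := by
  have hsub : (single 0 p + single 1 q) - (single 0 a + single 1 b) =
      single (0 : Fin 2) (p - a) + single 1 (q - b) := by
    ext j
    fin_cases j <;> simp
  rw [X_pow_mul_X_pow_eq_monomial, X_pow_mul_X_pow_eq_monomial, X_pow_mul_X_pow_eq_monomial,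
    apolarAct_monomial, one_smul, monoDeriv_monomial, smul_monomial, hsub]
  simp [Fin.prod_univ_two]

theorem X_one_pow_mem_apolarIdeal (k : ℕ) :
    (X 1 ^ (k + 1) : MvPolynomial (Fin 2) ℂ) ∈ apolarIdeal (X 0 ^ k * X 1 ^ k + X 0 ^ (2 * k)) := by
  have h1 : (X 1 ^ (k + 1) : MvPolynomial (Fin 2) ℂ) = X 0 ^ 0 * X 1 ^ (k + 1) := by simp
  have h2 : (X 0 ^ (2 * k) : MvPolynomial (Fin 2) ℂ) = X 0 ^ (2 * k) * X 1 ^ 0 := by simp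
  rw [mem_apolarIdeal, h1, h2, apolarAct_add_right, apolarAct_X_pow_mul_X_pow,
    apolarAct_X_pow_mul_X_pow]
  simp

theorem Nat.two_mul_descFactorial_succ (k : ℕ) :
    (2 * k).descFactorial (k + 1) = (2 * k).choose k * (k * k.factorial) := by
  rw [Nat.descFactorial_succ, Nat.descFactorial_eq_factorial_mul_choose, two_mul,
    Nat.add_sub_cancel]
  ring

theorem X_zero_pow_sub_mem_apolarIdeal {k : ℕ} (hk : 1 ≤ k) :
    (X 0 ^ (k + 1) - C ((Nat.choose (2 * k) k : ℂ)) * (X 0 * X 1 ^ k) : MvPolynomial (Fin 2) ℂ) ∈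
      apolarIdeal (X 0 ^ k * X 1 ^ k + X 0 ^ (2 * k)) := by
  have h1 : (X 0 ^ (k + 1) : MvPolynomial (Fin 2) ℂ) = X 0 ^ (k + 1) * X 1 ^ 0 := by simp
  have h2 : (X 0 ^ (2 * k) : MvPolynomial (Fin 2) ℂ) = X 0 ^ (2 * k) * X 1 ^ 0 := by simp
  have h3 : (X 0 * X 1 ^ k : MvPolynomial (Fin 2) ℂ) = X 0 ^ 1 * X 1 ^ k := by simp
  rw [mem_apolarIdeal, h1, h2, h3, apolarAct_sub_left, apolarAct_C_mul, apolarAct_add_right,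
    apolarAct_add_right, apolarAct_X_pow_mul_X_pow, apolarAct_X_pow_mul_X_pow,
    apolarAct_X_pow_mul_X_pow, apolarAct_X_pow_mul_X_pow, Nat.two_mul_descFactorial_succ]
  rw [show 2 * k - (k + 1) = k - 1 by omega,
    Nat.descFactorial_eq_zero_iff_lt.mpr (by omega : 0 < k)]
  simp [smul_smul, Nat.descFactorial_self]

theorem X_pow_mul_X_pow_mem_span {k a b : ℕ} (h : k < b ∨ (k < a ∧ 0 < b)) :
    (X 0 ^ a * X 1 ^ b : MvPolynomial (Fin 2) ℂ) ∈ Ideal.span {X 1 ^ (k + 1),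
      X 0 ^ (k + 1) - C ((Nat.choose (2 * k) k : ℂ)) * (X 0 * X 1 ^ k)} := by
  rw [Ideal.mem_span_pair]
  rcases h with hb | ⟨ha, hb⟩
  · obtain ⟨j, rfl⟩ := Nat.exists_eq_add_of_lt hb
    exact ⟨X 0 ^ a * X 1 ^ j, 0, by ring⟩
  · obtain ⟨i, rfl⟩ := Nat.exists_eq_add_of_lt ha
    obtain ⟨j, rfl⟩ := Nat.exists_eq_add_of_lt hb
    -- `X^{k+1} Y = Y · (X^{k+1} - c X Y^k) + c X Y^{k+1}`
    exact ⟨C ((Nat.choose (2 * k) k : ℂ)) * X 0 ^ (i + 1) * X 1 ^ j, X 0 ^ i * X 1 ^ (j + 1),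
      by ring⟩

theorem mem_restrictSupport_sup_span {k : ℕ} (hk : 1 ≤ k) (D : MvPolynomial (Fin 2) ℂ) :
    D ∈ restrictSupport ℂ (Set.Iic (single 0 k + single 1 k)) ⊔
      (Ideal.span {X 1 ^ (k + 1),
        X 0 ^ (k + 1) - C ((Nat.choose (2 * k) k : ℂ)) * (X 0 * X 1 ^ k)}).restrictScalars ℂ := by
  set S := restrictSupport ℂ (Set.Iic (single (0 : Fin 2) k + single 1 k)) ⊔
    (Ideal.span {X 1 ^ (k + 1),
      X 0 ^ (k + 1) - C ((Nat.choose (2 * k) k : ℂ)) * (X 0 * X 1 ^ k)}).restrictScalars ℂ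
  have of_pos (a b : ℕ) (h : a ≤ k ∨ 0 < b) :
      (X 0 ^ a * X 1 ^ b : MvPolynomial (Fin 2) ℂ) ∈ S := by
    by_cases hab : a ≤ k ∧ b ≤ k
    · refine Submodule.mem_sup_left ?_
      rw [X_pow_mul_X_pow_eq_monomial, monomial_mem_restrictSupport]
      left
      simp [Finsupp.le_def, Fin.forall_fin_two, hab]
    · exact Submodule.mem_sup_right (X_pow_mul_X_pow_mem_span (by omega))
  have of_all (a b : ℕ) : (X 0 ^ a * X 1 ^ b : MvPolynomial (Fin 2) ℂ) ∈ S := by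
    by_cases h : a ≤ k ∨ 0 < b
    · exact of_pos a b h
    obtain ⟨i, rfl⟩ := Nat.exists_eq_add_of_lt (not_le.mp (not_or.mp h).1)
    obtain rfl : b = 0 := by omega
    have hsplit : (X 0 ^ (k + i + 1) * X 1 ^ 0 : MvPolynomial (Fin 2) ℂ) =
        X 0 ^ i * (X 0 ^ (k + 1) - C ((Nat.choose (2 * k) k : ℂ)) * (X 0 * X 1 ^ k)) +
          (Nat.choose (2 * k) k : ℂ) • (X 0 ^ (i + 1) * X 1 ^ k) := by
      rw [smul_eq_C_mul]
      ring
    rw [hsplit]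
    refine S.add_mem (Submodule.mem_sup_right ?_) (S.smul_mem _ (of_pos _ _ (by omega)))
    exact Ideal.mul_mem_left _ _ (Ideal.subset_span (Set.mem_insert_of_mem _ rfl))
  induction D using MvPolynomial.induction_on' with
  | monomial m c =>
    rw [monomial_fin_two, mul_assoc, ← smul_eq_C_mul]
    exact S.smul_mem c (of_all _ _)
  | add p q hp hq => exact S.add_mem hp hq

theorem eq_zero_of_mem_restrictSupport_of_apolarAct_eq_zero {k : ℕ} (hk : 1 ≤ k)
    {R : MvPolynomial (Fin 2) ℂ} (hR : R ∈ restrictSupport ℂ (Set.Iic (single 0 k + single 1 k)))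
    (h : apolarAct R (X 0 ^ k * X 1 ^ k + X 0 ^ (2 * k)) = 0) : R = 0 := by
  set s₁ : Fin 2 →₀ ℕ := single 0 k + single 1 k
  set s₂ : Fin 2 →₀ ℕ := single 0 (2 * k) + single 1 0
  have hf : (X 0 ^ k * X 1 ^ k + X 0 ^ (2 * k) : MvPolynomial (Fin 2) ℂ) =
      monomial s₁ 1 + monomial s₂ 1 := by
    rw [← X_pow_mul_X_pow_eq_monomial, ← X_pow_mul_X_pow_eq_monomial, pow_zero, mul_one]
  have hcoeff (t : Fin 2 →₀ ℕ) :
      coeff t (apolarAct R (monomial s₁ 1)) + coeff t (apolarAct R (monomial s₂ 1)) = 0 := by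
    rw [← coeff_add, ← apolarAct_add_right, ← hf, h, coeff_zero]
  have houtside (m : Fin 2 →₀ ℕ) (hm : ¬m ≤ s₁) : R.coeff m = 0 :=
    notMem_support_iff.mp fun hm' => hm (hR hm')
  -- the monomial `x^{k - a} y^{k - b}` with `b < k` occurs only in `X^a Y^b ⌟ x^k y^k`
  have low (m : Fin 2 →₀ ℕ) (hm1 : m 1 < k) : R.coeff m = 0 := by
    by_cases hm : m ≤ s₁
    · have := hcoeff (s₁ - m)
      rw [coeff_apolarAct_monomial_of_add_eq R (add_tsub_cancel_of_le hm),
        coeff_apolarAct_monomial_of_not_le R ?_, add_zero] at this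
      · exact (mul_eq_zero.mp this).resolve_right (prod_descFactorial_ne_zero hm)
      · intro hle
        have := hle 1
        simp [s₁, s₂] at this
        omega
    · exact houtside m hm
  ext m
  rw [coeff_zero]
  by_cases hm : m ≤ s₁
  · by_cases hm1 : m 1 < k
    · exact low m hm1
    have ht : s₁ - m ≤ s₂ := by
      intro i
      fin_cases i <;> simp [s₁, s₂] <;> omega
    have := hcoeff (s₁ - m)
    -- `x^{k - a}` also comes from `X^{k + a} ⌟ x^{2k}`, whose coefficient `low` has killed
    rw [coeff_apolarAct_monomial_of_add_eq R (add_tsub_cancel_of_le hm),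
      coeff_apolarAct_monomial_of_add_eq R (tsub_add_cancel_of_le ht),
      low (s₂ - (s₁ - m)), zero_mul, add_zero] at this
    · exact (mul_eq_zero.mp this).resolve_right (prod_descFactorial_ne_zero hm)
    · simp [s₁, s₂]
      omega
  · exact houtside m hm

/-- For `k ≥ 2`, the apolar ideal of `x^k y^k + x^{2k}` is
`(Y^{k+1}, X^{k+1} − binom(2k,k)·X Y^k)`. -/
theorem stmt5 (k : ℕ) (hk : 2 ≤ k) :
    {D : MvPolynomial (Fin 2) ℂ |
        apolarAct D ((X 0) ^ k * (X 1) ^ k + (X 0) ^ (2 * k)) = 0} =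
      (Ideal.span {(X 1 : MvPolynomial (Fin 2) ℂ) ^ (k+1),
          (X 0) ^ (k+1) - C ((Nat.choose (2*k) k : ℂ)) * (X 0 * (X 1) ^ k)} :
        Set (MvPolynomial (Fin 2) ℂ)) := by
  have hk₁ : 1 ≤ k := by omega
  have hspan : Ideal.span {(X 1 : MvPolynomial (Fin 2) ℂ) ^ (k + 1),
      X 0 ^ (k + 1) - C ((Nat.choose (2 * k) k : ℂ)) * (X 0 * X 1 ^ k)} ≤
      apolarIdeal (X 0 ^ k * X 1 ^ k + X 0 ^ (2 * k)) :=
    Ideal.span_le.mpr <| Set.insert_subset_iff.mpr ⟨X_one_pow_mem_apolarIdeal k,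
      Set.singleton_subset_iff.mpr (X_zero_pow_sub_mem_apolarIdeal hk₁)⟩
  refine congrArg SetLike.coe (le_antisymm (fun D hD => ?_) hspan)
  obtain ⟨R, hR, J, hJ, rfl⟩ := Submodule.mem_sup.mp (mem_restrictSupport_sup_span hk₁ D)
  have hR0 : R = 0 := eq_zero_of_mem_restrictSupport_of_apolarAct_eq_zero hk₁ hR
    (mem_apolarIdeal.mp (by simpa using (apolarIdeal _).sub_mem hD (hspan hJ)))
  rwa [hR0, zero_add]
end

section
/- Let k ≥ 2, f = x^k y^k + λ(ax + by)^{2k} with λ ≠ 0 and ab = 0 (and (a,b) ≠ (0,0)). Then the Waring rank of f over ℂ equals k+1. -/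
open MvPolynomial

/-- The linear form with coefficient vector `a`. -/
noncomputable def linForm {n : ℕ} (a : Fin n → ℂ) : MvPolynomial (Fin n) ℂ :=
  ∑ j, C (a j) * X j

/-- The Waring rank of a degree-`d` form `f`: the least `r` such that `f` is a
linear combination of `r` `d`-th powers of linear forms. -/
noncomputable def waringRank {n : ℕ} (d : ℕ) (f : MvPolynomial (Fin n) ℂ) : ℕ :=
  sInf {r : ℕ | ∃ (a : Fin r → Fin n → ℂ) (c : Fin r → ℂ),
    f = ∑ i, c i • (linForm (a i)) ^ d}

/-!
The upper bound is an explicit decomposition. If `ζ` is a primitive `k`-th root of unity, the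
sum `∑ j < k, (ρ ζ^j x + y)^(2k)` keeps only the monomials whose `x`-degree is divisible by `k`,
namely `y^(2k)`, `x^k y^k` and `x^(2k)`; for `ρ^k = c·C(2k,k)` it equals `k y^(2k)` plus a
multiple of `x^k y^k + c x^(2k)`, which is therefore a combination of `k + 1` powers.

The lower bound is Sylvester's catalecticant bound: a sum of `r` powers of linear forms has a
catalecticant (Hankel) matrix of the form `Vᵀ D V` with `D` of size `r`, hence of rank at most
`r`, while the middle catalecticant of `x^k y^k + c x^(2k)` is an antidiagonal matrix perturbed
in one corner, which is invertible.

The case `a = 0` reduces to `b = 0` by swapping the variables.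
-/

open Finset
open scoped Matrix

lemma rename_linForm {n : ℕ} (σ : Equiv.Perm (Fin n)) (a : Fin n → ℂ) :
    rename σ (linForm a) = linForm (a ∘ σ.symm) := by
  rw [linForm, linForm, map_sum]
  exact Fintype.sum_equiv σ _ _ fun j => by simp

lemma waringRank_rename {n : ℕ} (d : ℕ) (σ : Equiv.Perm (Fin n))
    (f : MvPolynomial (Fin n) ℂ) :
    waringRank d (rename σ f) = waringRank d f := by
  have mem_rename : ∀ (τ : Equiv.Perm (Fin n)) (g : MvPolynomial (Fin n) ℂ) (r : ℕ),
      (∃ (a : Fin r → Fin n → ℂ) (c : Fin r → ℂ), g = ∑ i, c i • linForm (a i) ^ d) →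
      ∃ (a : Fin r → Fin n → ℂ) (c : Fin r → ℂ),
        rename τ g = ∑ i, c i • linForm (a i) ^ d := by
    rintro τ g r ⟨a, c, rfl⟩
    exact ⟨fun i => a i ∘ τ.symm, c, by simp [map_sum, rename_linForm]⟩
  refine congrArg sInf (Set.ext fun r => ⟨fun h => ?_, mem_rename σ f r⟩)
  simpa [rename_rename] using mem_rename σ.symm _ r h

noncomputable def xyExp (i j : ℕ) : Fin 2 →₀ ℕ :=
  Finsupp.single 0 i + Finsupp.single 1 j

lemma xyExp_inj {i j i' j' : ℕ} : xyExp i j = xyExp i' j' ↔ i = i' ∧ j = j' := by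
  refine ⟨fun h => ⟨?_, ?_⟩, fun h => by rw [h.1, h.2]⟩
  · simpa [xyExp] using DFunLike.congr_fun h 0
  · simpa [xyExp] using DFunLike.congr_fun h 1

lemma monomial_xyExp (i j : ℕ) (a : ℂ) :
    monomial (xyExp i j) a = C a * X 0 ^ i * X 1 ^ j := by
  rw [xyExp, X_pow_eq_monomial, X_pow_eq_monomial, C_mul_monomial, monomial_mul, mul_one,
    mul_one]

lemma linForm_two (a : Fin 2 → ℂ) : linForm a = C (a 0) * X 0 + C (a 1) * X 1 := by
  rw [linForm, Fin.sum_univ_two]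

lemma linForm_pow_eq_sum (a : Fin 2 → ℂ) (d : ℕ) :
    linForm a ^ d = ∑ p ∈ antidiagonal d,
      monomial (xyExp p.1 p.2) (d.choose p.1 * (a 0 ^ p.1 * a 1 ^ p.2)) := by
  rw [linForm_two, (Commute.all _ _).add_pow']
  refine sum_congr rfl fun p _ => ?_
  rw [monomial_xyExp, nsmul_eq_mul, map_mul, map_mul, map_pow, map_pow, map_natCast]
  ring

lemma coeff_linForm_pow (a : Fin 2 → ℂ) {i j d : ℕ} (h : i + j = d) :
    coeff (xyExp i j) (linForm a ^ d) = d.choose i * (a 0 ^ i * a 1 ^ j) := by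
  rw [linForm_pow_eq_sum, coeff_sum, sum_eq_single (i, j)]
  · rw [coeff_monomial, if_pos rfl]
  · rintro p - hp
    rw [coeff_monomial, if_neg fun h => hp (Prod.ext (xyExp_inj.1 h).1 (xyExp_inj.1 h).2)]
  · exact fun h' => absurd (mem_antidiagonal.2 h) h'

noncomputable def catalecticant (m n : ℕ) (f : MvPolynomial (Fin 2) ℂ) :
    Matrix (Fin (m + 1)) (Fin (n + 1)) ℂ :=
  Matrix.of fun i j => coeff (xyExp (i + j) (m - i + (n - j))) f / (m + n).choose (i + j)

noncomputable def veroneseMatrix {r : ℕ} (m : ℕ) (a : Fin r → Fin 2 → ℂ) :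
    Matrix (Fin r) (Fin (m + 1)) ℂ :=
  Matrix.of fun l i => a l 0 ^ (i : ℕ) * a l 1 ^ (m - i)

lemma catalecticant_sum_smul_linForm_pow {r : ℕ} (m n : ℕ) (a : Fin r → Fin 2 → ℂ)
    (w : Fin r → ℂ) :
    catalecticant m n (∑ l, w l • linForm (a l) ^ (m + n)) =
      (veroneseMatrix m a)ᵀ * Matrix.diagonal w * veroneseMatrix n a := by
  ext i j
  have hi := i.is_le
  have hj := j.is_le
  have hchoose : ((m + n).choose (i + j) : ℂ) ≠ 0 := by
    exact_mod_cast (Nat.choose_pos (by omega)).ne'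
  rw [Matrix.mul_apply]
  simp only [catalecticant, veroneseMatrix, Matrix.of_apply, Matrix.mul_diagonal,
    Matrix.transpose_apply, coeff_sum, coeff_smul, smul_eq_mul,
    coeff_linForm_pow _ (show (i + j : ℕ) + (m - i + (n - j)) = m + n by omega)]
  rw [div_eq_iff hchoose, sum_mul]
  refine sum_congr rfl fun l _ => ?_
  ring

lemma rank_catalecticant_le {r : ℕ} (m n : ℕ) (a : Fin r → Fin 2 → ℂ) (w : Fin r → ℂ)
    {f : MvPolynomial (Fin 2) ℂ} (hf : f = ∑ l, w l • linForm (a l) ^ (m + n)) :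
    (catalecticant m n f).rank ≤ r := by
  rw [hf, catalecticant_sum_smul_linForm_pow, Matrix.mul_assoc]
  exact (Matrix.rank_mul_le_left _ _).trans (Matrix.rank_le_width _)

lemma IsPrimitiveRoot.sum_pow_pow_eq {R : Type*} [CommRing R] [IsDomain R] {ζ : R} {k : ℕ}
    (hζ : IsPrimitiveRoot ζ k) (m : ℕ) :
    ∑ j ∈ range k, (ζ ^ j) ^ m = if k ∣ m then (k : R) else 0 := by
  simp_rw [← pow_mul, mul_comm _ m, pow_mul]
  split_ifs with h
  · simp [(hζ.pow_eq_one_iff_dvd m).2 h]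
  · have hne : ζ ^ m - 1 ≠ 0 := sub_ne_zero.2 fun h' => h ((hζ.pow_eq_one_iff_dvd m).1 h')
    refine (mul_eq_zero.1 ?_).resolve_right hne
    rw [geom_sum_mul, ← pow_mul, mul_comm, pow_mul, hζ.pow_eq_one, one_pow, sub_self]

lemma sum_linForm_pow_of_isPrimitiveRoot {ζ : ℂ} {k : ℕ} (hζ : IsPrimitiveRoot ζ k)
    (ρ : ℂ) (d : ℕ) :
    ∑ j ∈ range k, linForm ![ρ * ζ ^ j, 1] ^ d =
      ∑ p ∈ antidiagonal d with k ∣ p.1,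
        monomial (xyExp p.1 p.2) (k * (d.choose p.1 * ρ ^ p.1)) := by
  simp_rw [linForm_pow_eq_sum]
  rw [sum_comm, sum_filter]
  refine sum_congr rfl fun p _ => ?_
  simp only [Matrix.cons_val_zero, Matrix.cons_val_one, one_pow, mul_one, mul_pow, ← map_sum,
    ← mul_sum, hζ.sum_pow_pow_eq]
  split_ifs
  · congr 1
    ring
  · simp

lemma filter_antidiagonal_two_mul_dvd {k : ℕ} (hk : 0 < k) :
    {p ∈ antidiagonal (2 * k) | k ∣ p.1} = {(0, 2 * k), (k, k), (2 * k, 0)} := by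
  ext ⟨i, j⟩
  simp only [mem_filter, HasAntidiagonal.mem_antidiagonal, mem_insert, mem_singleton, Prod.mk.injEq]
  constructor
  · rintro ⟨hij, t, rfl⟩
    have ht : t ≤ 2 := by nlinarith
    interval_cases t <;> omega
  · rintro (⟨rfl, rfl⟩ | ⟨rfl, rfl⟩ | ⟨rfl, rfl⟩) <;> simp [two_mul]

lemma sum_linForm_pow_two_mul_of_isPrimitiveRoot {ζ : ℂ} {k : ℕ} (hk : 0 < k)
    (hζ : IsPrimitiveRoot ζ k) (ρ : ℂ) :
    ∑ j ∈ range k, linForm ![ρ * ζ ^ j, 1] ^ (2 * k) =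
      C (k : ℂ) * (X 1 ^ (2 * k) + C ((2 * k).choose k * ρ ^ k) * (X 0 ^ k * X 1 ^ k) +
        C (ρ ^ (2 * k)) * X 0 ^ (2 * k)) := by
  have h₁ : ((0, 2 * k) : ℕ × ℕ) ∉ ({(k, k), (2 * k, 0)} : Finset (ℕ × ℕ)) := by
    simp only [mem_insert, mem_singleton, Prod.mk.injEq]; omega
  have h₂ : ((k, k) : ℕ × ℕ) ∉ ({(2 * k, 0)} : Finset (ℕ × ℕ)) := by
    simp only [mem_singleton, Prod.mk.injEq]; omega
  rw [sum_linForm_pow_of_isPrimitiveRoot hζ, filter_antidiagonal_two_mul_dvd hk,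
    sum_insert h₁, sum_insert h₂, sum_singleton]
  simp only [monomial_xyExp, Nat.choose_zero_right, Nat.choose_self, map_mul, map_pow,
    map_natCast, Nat.cast_one, map_one]
  ring

section BinomialPlusPower

variable {k : ℕ}

lemma catalecticant_X_pow_mul_X_pow_add_apply (c : ℂ) (i j : Fin (k + 1)) :
    catalecticant k k (X 0 ^ k * X 1 ^ k + C c * X 0 ^ (2 * k)) i j =
      (if j = i.rev then ((2 * k).choose k : ℂ)⁻¹ else 0) +
        if i = Fin.last k ∧ j = Fin.last k then c else 0 := by
  have hi := i.is_le
  have hj := j.is_le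
  have hrev : j = i.rev ↔ (i + j : ℕ) = k := by rw [Fin.ext_iff, Fin.val_rev]; omega
  have hlast : i = Fin.last k ∧ j = Fin.last k ↔ (i + j : ℕ) = 2 * k := by
    rw [Fin.ext_iff, Fin.ext_iff, Fin.val_last]; omega
  have hf : (X 0 ^ k * X 1 ^ k + C c * X 0 ^ (2 * k) : MvPolynomial (Fin 2) ℂ) =
      monomial (xyExp k k) 1 + monomial (xyExp (2 * k) 0) c := by
    simp [monomial_xyExp]
  simp only [catalecticant, Matrix.of_apply, hf, coeff_add, coeff_monomial, xyExp_inj, hrev,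
    hlast, add_div]
  have hk : (k : ℕ) = ↑i + ↑j ∧ k = k - ↑i + (k - ↑j) ↔ (i + j : ℕ) = k := by omega
  have h2k : 2 * k = ↑i + ↑j ∧ 0 = k - ↑i + (k - ↑j) ↔ (i + j : ℕ) = 2 * k := by omega
  simp only [hk, h2k]
  congr 1
  · split_ifs with h
    · rw [h, one_div, ← two_mul]
    · rw [zero_div]
  · split_ifs with h
    · rw [h, ← two_mul, Nat.choose_self, Nat.cast_one, div_one]
    · rw [zero_div]

lemma mulVec_catalecticant_X_pow_mul_X_pow_add_apply (c : ℂ) (v : Fin (k + 1) → ℂ)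
    (i : Fin (k + 1)) :
    (catalecticant k k (X 0 ^ k * X 1 ^ k + C c * X 0 ^ (2 * k)) *ᵥ v) i =
      ((2 * k).choose k : ℂ)⁻¹ * v i.rev +
        if i = Fin.last k then c * v (Fin.last k) else 0 := by
  simp only [Matrix.mulVec, dotProduct, catalecticant_X_pow_mul_X_pow_add_apply, add_mul,
    sum_add_distrib, ite_mul, zero_mul, ite_and, sum_ite_eq', mem_univ, if_true]
  split_ifs <;> simp

lemma isUnit_catalecticant_X_pow_mul_X_pow_add (hk : 0 < k) (c : ℂ) :
    IsUnit (catalecticant k k (X 0 ^ k * X 1 ^ k + C c * X 0 ^ (2 * k))) := by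
  have hs : ((2 * k).choose k : ℂ)⁻¹ ≠ 0 :=
    inv_ne_zero (by exact_mod_cast (Nat.choose_pos (by omega)).ne')
  refine Matrix.mulVec_injective_iff_isUnit.1 fun u v huv => ?_
  set H := catalecticant k k (X 0 ^ k * X 1 ^ k + C c * X 0 ^ (2 * k))
  have hker : ∀ i, (H *ᵥ (u - v)) i = 0 := by simp [Matrix.mulVec_sub, huv]
  -- the first row of `H` only sees the last coordinate, after which `H` acts as a reflection
  have hlast : (u - v) (Fin.last k) = 0 := by
    have h0 := hker 0
    have h0_ne_last : (0 : Fin (k + 1)) ≠ Fin.last k := by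
      rw [Ne, Fin.ext_iff, Fin.val_zero, Fin.val_last]; omega
    rw [mulVec_catalecticant_X_pow_mul_X_pow_add_apply, if_neg h0_ne_last, Fin.rev_zero,
      add_zero] at h0
    exact (mul_eq_zero.1 h0).resolve_left hs
  refine sub_eq_zero.1 (funext fun j => ?_)
  have hj := hker j.rev
  rw [mulVec_catalecticant_X_pow_mul_X_pow_add_apply, Fin.rev_rev, hlast, mul_zero, ite_self,
    add_zero] at hj
  exact (mul_eq_zero.1 hj).resolve_left hs

lemma rank_catalecticant_X_pow_mul_X_pow_add (hk : 0 < k) (c : ℂ) :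
    (catalecticant k k (X 0 ^ k * X 1 ^ k + C c * X 0 ^ (2 * k))).rank = k + 1 := by
  rw [Matrix.rank_of_isUnit _ (isUnit_catalecticant_X_pow_mul_X_pow_add hk c), Fintype.card_fin]

lemma exists_eq_sum_smul_linForm_pow (hk : 0 < k) {c : ℂ} (hc : c ≠ 0) :
    ∃ (a : Fin (k + 1) → Fin 2 → ℂ) (w : Fin (k + 1) → ℂ),
      X 0 ^ k * X 1 ^ k + C c * X 0 ^ (2 * k) = ∑ i, w i • linForm (a i) ^ (2 * k) := by
  have hs : ((2 * k).choose k : ℂ) ≠ 0 := by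
    exact_mod_cast (Nat.choose_pos (by omega : k ≤ 2 * k)).ne'
  have hk' : (k : ℂ) ≠ 0 := by exact_mod_cast hk.ne'
  obtain ⟨ρ, hρ⟩ := IsAlgClosed.exists_pow_nat_eq (c * (2 * k).choose k) hk
  obtain ⟨t, ht, ht'⟩ : ∃ t : ℂ,
      t * k * ((2 * k).choose k * ρ ^ k) = 1 ∧ t * k * ρ ^ (2 * k) = c :=
    ⟨(k * c * (2 * k).choose k ^ 2)⁻¹, by rw [hρ]; field_simp,
      by rw [pow_mul', hρ]; field_simp⟩
  obtain ⟨ζ, hζ⟩ : ∃ ζ : ℂ, IsPrimitiveRoot ζ k :=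
    ⟨_, Complex.isPrimitiveRoot_exp k hk.ne'⟩
  refine ⟨Fin.cons ![0, 1] fun j : Fin k => ![ρ * ζ ^ (j : ℕ), 1],
    Fin.cons (-(k * t)) fun _ => t, ?_⟩
  rw [Fin.sum_univ_succ]
  simp only [Fin.cons_zero, Fin.cons_succ]
  rw [← smul_sum, Fin.sum_univ_eq_sum_range (fun j => linForm ![ρ * ζ ^ j, 1] ^ (2 * k)),
    sum_linForm_pow_two_mul_of_isPrimitiveRoot hk hζ]
  simp only [smul_eq_C_mul, linForm_two, Matrix.cons_val_zero, Matrix.cons_val_one, map_zero,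
    map_one, zero_mul, one_mul, zero_add]
  have hC : C (t * k * ((2 * k).choose k * ρ ^ k)) = (1 : MvPolynomial (Fin 2) ℂ) := by
    rw [ht, map_one]
  have hC' : C (t * k * ρ ^ (2 * k)) = (C c : MvPolynomial (Fin 2) ℂ) := by
    rw [ht']
  simp only [map_mul, map_neg, map_pow, map_natCast] at hC hC' ⊢
  linear_combination (-(X 0 ^ k * X 1 ^ k) : MvPolynomial (Fin 2) ℂ) * hC - X 0 ^ (2 * k) * hC'

lemma waringRank_X_pow_mul_X_pow_add (hk : 0 < k) {c : ℂ} (hc : c ≠ 0) :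
    waringRank (2 * k) (X 0 ^ k * X 1 ^ k + C c * X 0 ^ (2 * k) : MvPolynomial (Fin 2) ℂ) =
      k + 1 := by
  obtain ⟨a, w, hf⟩ := exists_eq_sum_smul_linForm_pow hk hc
  refine IsLeast.csInf_eq ⟨⟨a, w, hf⟩, ?_⟩
  rintro r ⟨a', w', hf'⟩
  rw [← rank_catalecticant_X_pow_mul_X_pow_add hk c]
  exact rank_catalecticant_le k k a' w' (by rwa [← two_mul])

end BinomialPlusPower

/-- For `k ≥ 2`, `f = x^k y^k + λ(ax+by)^{2k}` with `λ ≠ 0`, `ab = 0`, `(a,b) ≠ (0,0)`,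
the Waring rank of `f` is `k + 1`. -/
theorem stmt13 (k : ℕ) (hk : 2 ≤ k) (a b lam : ℂ) (hlam : lam ≠ 0)
    (hab : a * b = 0) (hne : ¬(a = 0 ∧ b = 0)) :
    waringRank (2 * k)
      ((X 0) ^ k * (X 1) ^ k + C lam * (C a * X 0 + C b * X 1) ^ (2 * k) :
        MvPolynomial (Fin 2) ℂ) = k + 1 := by
  rcases mul_eq_zero.1 hab with rfl | rfl
  · have hb : b ≠ 0 := fun hb => hne ⟨rfl, hb⟩
    have hswap : (X 0 ^ k * X 1 ^ k + C lam * (C 0 * X 0 + C b * X 1) ^ (2 * k) :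
        MvPolynomial (Fin 2) ℂ) = rename (Equiv.swap 0 1)
          (X 0 ^ k * X 1 ^ k + C (lam * b ^ (2 * k)) * X 0 ^ (2 * k)) := by
      simp only [map_add, map_mul, map_pow, rename_X, rename_C, Equiv.swap_apply_left,
        Equiv.swap_apply_right, C_0, zero_mul, zero_add]
      ring
    rw [hswap, waringRank_rename]
    exact waringRank_X_pow_mul_X_pow_add (by omega) (mul_ne_zero hlam (pow_ne_zero _ hb))
  · have ha : a ≠ 0 := fun ha => hne ⟨ha, rfl⟩
    have hx : (X 0 ^ k * X 1 ^ k + C lam * (C a * X 0 + C 0 * X 1) ^ (2 * k) :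
        MvPolynomial (Fin 2) ℂ) = X 0 ^ k * X 1 ^ k + C (lam * a ^ (2 * k)) * X 0 ^ (2 * k) := by
      simp only [map_mul, map_pow, C_0, zero_mul, add_zero]
      ring
    rw [hx]
    exact waringRank_X_pow_mul_X_pow_add (by omega) (mul_ne_zero hlam (pow_ne_zero _ ha))
end
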